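/- Let σ > 0 and φ ∈ [−2π/3, 2π/3]. For real s with |s| < 2/√3 define Φ(s) = Σ_{n=1}^∞ (i^n/(n−1)!) · [Γ(3n/2 − 1)/Γ(n/2)] · 3^{1−n} · e^{iφ(1/2 − 3n/4)} · s^{n−1} (this series converges for |s| < 2/√3). Then ∫_{−2/√3}^{2/√3} Φ(s)·e^{−σ·s²} ds = Σ_{n=0}^∞ i·(−1)^n · [Γ(3n + 1/2)/(Γ(n + 1/2)·3^{2n}·(2n)!)] · e^{iφ(−3n/2 − 1/4)} · γ(n + 1/2, (4/3)σ) · σ^{−n − 1/2}, where the series on the right converges absolutely. -/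

import Mathlib

open Complex MeasureTheory

/-- Lower incomplete gamma function `γ(ν, x) = ∫_0^x t^{ν−1} e^{−t} dt`. -/
noncomputable def lowerGamma (ν x : ℝ) : ℝ := ∫ t in (0 : ℝ)..x, t ^ (ν - 1) * Real.exp (-t)

/-- `Φ(s) = Σ_{n=1}^∞ (i^n/(n−1)!)·[Γ(3n/2−1)/Γ(n/2)]·3^{1−n}·e^{iφ(1/2−3n/4)}·s^{n−1}`. -/
noncomputable def PhiFun (φ : ℝ) (s : ℝ) : ℂ :=
  ∑' n : ℕ,
    Complex.I ^ (n + 1) / (n.factorial : ℂ) *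
      ((Real.Gamma (3 * (n + 1) / 2 - 1) / Real.Gamma ((n + 1) / 2) : ℝ) : ℂ) *
      (3 : ℂ) ^ (1 - ((n : ℤ) + 1)) *
      Complex.exp (Complex.I * φ * (1 / 2 - 3 * (n + 1) / 4)) * (s : ℂ) ^ n

/-- Terms of the series on the right-hand side. -/
noncomputable def rhsTerm (σ φ : ℝ) (n : ℕ) : ℂ :=
  Complex.I * (-1 : ℂ) ^ n *
    ((Real.Gamma (3 * n + 1 / 2) /
        (Real.Gamma ((n : ℝ) + 1 / 2) * 3 ^ (2 * n) * (2 * n).factorial) : ℝ) : ℂ) *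
    Complex.exp (Complex.I * φ * (-(3 * n) / 2 - 1 / 4)) *
    ((lowerGamma ((n : ℝ) + 1 / 2) (4 / 3 * σ) * σ ^ (-(n : ℝ) - 1 / 2) : ℝ) : ℂ)

/-!
Expand `Φ(s) e^{-σ s²}` termwise. With `c = 2/√3` the coefficients `a_n` of `Φ` only satisfy
`|a_n| c^n = O(n^{-1/2})` (read off from the ratio `a_{n+2}/a_n`), so the series does not converge
uniformly on `[-c, c]`; but the `n`-th term has `L¹`-norm at most `2c |a_n| c^n / (n+1)`, which is
summable, and this justifies integrating termwise. The odd Gaussian moments vanish, and the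
substitution `t = σ s²` turns `∫_{-c}^{c} s^{2m} e^{-σ s²} ds` into `σ^{-m-1/2} γ(m + 1/2, σ c²)`,
which is the `m`-th term on the right.
-/

theorem le_max_of_le_two_step {α : Type*} [LinearOrder α] {b : ℕ → α}
    (h : ∀ n, b (n + 2) ≤ b n) (n : ℕ) : b n ≤ max (b 0) (b 1) := by
  induction n using Nat.strong_induction_on with
  | _ n ih =>
    match n with
    | 0 => exact le_max_left _ _
    | 1 => exact le_max_right _ _
    | n + 2 => exact (h n).trans (ih n (by omega))

theorem summable_div_succ_of_sq_mul_succ_le {x : ℕ → ℝ} {C : ℝ}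
    (h : ∀ n, x n ^ 2 * (n + 1) ≤ C) : Summable fun n : ℕ => x n / (n + 1) := by
  have hp : Summable fun n : ℕ => ((n + 1 : ℝ) ^ (3 / 2 : ℝ))⁻¹ := by
    simpa using (summable_nat_add_iff 1).2
      (Real.summable_nat_rpow_inv.2 (by norm_num : (1 : ℝ) < 3 / 2))
  refine .of_norm_bounded (hp.mul_left √C) fun n => ?_
  have hn : (0 : ℝ) < n + 1 := n.cast_add_one_pos
  have hpow : (n + 1 : ℝ) ^ (3 / 2 : ℝ) = (n + 1) * √(n + 1) := by
    rw [show (3 / 2 : ℝ) = 1 + 1 / 2 by norm_num, Real.rpow_add hn, Real.rpow_one,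
      Real.sqrt_eq_rpow]
  have hx : |x n| ≤ √C / √(n + 1) := by
    rw [← Real.sqrt_div' _ hn.le]
    exact Real.abs_le_sqrt ((le_div_iff₀ hn).2 (h n))
  calc ‖x n / (n + 1)‖ = |x n| / (n + 1) := by rw [Real.norm_eq_abs, abs_div, abs_of_pos hn]
    _ ≤ √C / √(n + 1) / (n + 1) := by gcongr
    _ = √C * ((n + 1 : ℝ) ^ (3 / 2 : ℝ))⁻¹ := by rw [hpow]; field_simp

section SymmetricInterval

variable {E : Type*} [NormedAddCommGroup E] [NormedSpace ℝ E] {f : ℝ → E}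

theorem intervalIntegral.integral_neg_symm_of_odd (hf : ∀ x, f (-x) = -f x) (c : ℝ) :
    ∫ x in -c..c, f x = 0 := by
  have hneg := intervalIntegral.integral_comp_neg (a := -c) (b := c) f
  simp only [hf, intervalIntegral.integral_neg, neg_neg] at hneg
  have htwo : (2 : ℝ) • ∫ x in -c..c, f x = 0 := by
    rw [two_smul]; nth_rewrite 1 [← hneg]; exact neg_add_cancel _
  exact (smul_eq_zero.1 htwo).resolve_left two_ne_zero

theorem intervalIntegral.integral_neg_symm_of_even (hf : ∀ x, f (-x) = f x) {c : ℝ}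
    (hint : IntervalIntegrable f volume (-c) c) :
    ∫ x in -c..c, f x = (2 : ℝ) • ∫ x in (0 : ℝ)..c, f x := by
  have h0 : (0 : ℝ) ∈ Set.uIcc (-c) c := by
    rcases le_total 0 c with hc | hc
    · exact Set.mem_uIcc.2 (Or.inl ⟨by linarith, hc⟩)
    · exact Set.mem_uIcc.2 (Or.inr ⟨hc, by linarith⟩)
  have hleft : ∫ x in -c..0, f x = ∫ x in (0 : ℝ)..c, f x := by
    simpa [hf] using (intervalIntegral.integral_comp_neg (a := 0) (b := c) f).symm
  rw [← intervalIntegral.integral_add_adjacent_intervals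
    (hint.mono_set (Set.uIcc_subset_uIcc Set.left_mem_uIcc h0))
    (hint.mono_set (Set.uIcc_subset_uIcc h0 Set.right_mem_uIcc)), hleft, two_smul]

end SymmetricInterval

theorem integral_abs_pow_neg_symm (n : ℕ) {c : ℝ} (hc : 0 ≤ c) :
    ∫ s in -c..c, |s| ^ n = 2 * c ^ (n + 1) / (n + 1) := by
  rw [intervalIntegral.integral_neg_symm_of_even (f := fun s => |s| ^ n) (fun x => by rw [abs_neg])
    ((continuous_abs.pow n).intervalIntegrable _ _), smul_eq_mul,
    intervalIntegral.integral_congr (g := fun s => s ^ n) fun s hs => by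
      rw [Set.uIcc_of_le hc] at hs; simp only [abs_of_nonneg hs.1], integral_pow]
  simp [zero_pow n.succ_ne_zero]
  ring

theorem intervalIntegral.hasSum_integral_of_summable_integral_norm {ι : Type*} [Countable ι]
    {E : Type*} [NormedAddCommGroup E] [NormedSpace ℝ E] {F : ι → ℝ → E} {a b : ℝ} (hab : a ≤ b)
    (hF : ∀ i, IntervalIntegrable (F i) volume a b)
    (hsum : Summable fun i => ∫ t in a..b, ‖F i t‖) :
    HasSum (fun i => ∫ t in a..b, F i t) (∫ t in a..b, ∑' i, F i t) := by
  simp only [intervalIntegral.integral_of_le hab] at hsum ⊢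
  exact MeasureTheory.hasSum_integral_of_summable_integral_norm
    (fun i => (intervalIntegrable_iff_integrableOn_Ioc_of_le hab).1 (hF i)) hsum

theorem lowerGamma_mul_sq {ν σ c : ℝ} (hν : 0 < ν) (hσ : 0 < σ) (hc : 0 ≤ c) :
    lowerGamma ν (σ * c ^ 2) =
      2 * σ ^ ν * ∫ x in (0 : ℝ)..c, x ^ (2 * ν - 1) * Real.exp (-σ * x ^ 2) := by
  set q : ℝ → ℝ := fun x => σ * x ^ 2
  set g : ℝ → ℝ := fun t => t ^ (ν - 1) * Real.exp (-t)
  have hq : ∀ x, HasDerivAt q (2 * σ * x) x := fun x => by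
    simpa [q, mul_comm, mul_assoc, mul_left_comm] using (hasDerivAt_pow 2 x).const_mul σ
  have hsubst : ∀ x, 0 < x →
      (g ∘ q) x * (2 * σ * x) = 2 * σ ^ ν * (x ^ (2 * ν - 1) * Real.exp (-σ * x ^ 2)) := by
    intro x hx
    simp only [g, q, Function.comp]
    rw [Real.mul_rpow hσ.le (by positivity), ← Real.rpow_natCast x 2, ← Real.rpow_mul hx.le,
      show 2 * ν - 1 = (2 : ℕ) * (ν - 1) + 1 by push_cast; ring, Real.rpow_add hx, Real.rpow_one,
      show σ ^ ν = σ ^ (ν - 1) * σ by rw [← Real.rpow_add_one hσ.ne']; ring_nf]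
    ring_nf
  have hint : IntervalIntegrable (fun x => x ^ (2 * ν - 1) * Real.exp (-σ * x ^ 2)) volume 0 c :=
    (intervalIntegral.intervalIntegrable_rpow' (by linarith)).mul_continuousOn (by fun_prop)
  have hg : IntervalIntegrable g volume 0 (σ * c ^ 2) :=
    (intervalIntegral.intervalIntegrable_rpow' (by linarith)).mul_continuousOn (by fun_prop)
  have hq_Icc : q '' Set.uIcc 0 c ⊆ Set.uIcc 0 (σ * c ^ 2) := by
    rintro _ ⟨x, hx, rfl⟩
    rw [Set.uIcc_of_le hc] at hx
    rw [Set.uIcc_of_le (by positivity)]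
    exact ⟨by positivity, mul_le_mul_of_nonneg_left (pow_le_pow_left₀ hx.1 hx.2 2) hσ.le⟩
  have key := intervalIntegral.integral_comp_mul_deriv''' (f := q) (f' := fun x => 2 * σ * x)
    (g := g) (a := 0) (b := c) (by fun_prop) (fun x _ => (hq x).hasDerivWithinAt) ?_ ?_ ?_
  · have hq0 : q 0 = 0 := by simp [q]
    rw [hq0] at key
    rw [lowerGamma, ← key, ← intervalIntegral.integral_const_mul]
    refine intervalIntegral.integral_congr_ae (.of_forall fun x hx => ?_)
    rw [Set.uIoc_of_le hc] at hx
    exact hsubst x hx.1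
  · rintro _ ⟨x, hx, rfl⟩
    have hx0 : 0 < q x := by
      rw [min_eq_left hc] at hx
      exact mul_pos hσ (pow_pos hx.1 2)
    exact ((Real.continuousAt_rpow_const _ _ (Or.inl hx0.ne')).mul
      (by fun_prop)).continuousWithinAt
  · exact ((intervalIntegrable_iff' (by finiteness)).1 hg).mono_set hq_Icc
  · rw [Set.uIcc_of_le hc, integrableOn_Icc_iff_integrableOn_Ioc]
    exact ((intervalIntegrable_iff_integrableOn_Ioc_of_le hc).1
      (hint.const_mul (2 * σ ^ ν))).congr_fun (fun x hx => (hsubst x hx.1).symm) measurableSet_Ioc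

noncomputable def gaussMoment (σ c : ℝ) (n : ℕ) : ℝ :=
  ∫ s in -c..c, s ^ n * Real.exp (-σ * s ^ 2)

theorem gaussMoment_odd (σ c : ℝ) (m : ℕ) : gaussMoment σ c (2 * m + 1) = 0 :=
  intervalIntegral.integral_neg_symm_of_odd
    (fun x => by rw [Odd.neg_pow ⟨m, rfl⟩, neg_sq, neg_mul]) c

theorem gaussMoment_even {σ c : ℝ} (hσ : 0 < σ) (hc : 0 ≤ c) (m : ℕ) :
    gaussMoment σ c (2 * m) = lowerGamma (m + 1 / 2) (σ * c ^ 2) * σ ^ (-(m : ℝ) - 1 / 2) := by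
  have hσν : σ ^ (-(m : ℝ) - 1 / 2) * σ ^ ((m : ℝ) + 1 / 2) = 1 := by
    rw [← Real.rpow_add hσ]; norm_num
  rw [lowerGamma_mul_sq (by positivity) hσ hc, gaussMoment,
    intervalIntegral.integral_neg_symm_of_even
      (fun x => by rw [Even.neg_pow ⟨m, two_mul m⟩, neg_sq])
      (by apply Continuous.intervalIntegrable; fun_prop)]
  simp only [show 2 * ((m : ℝ) + 1 / 2) - 1 = (2 * m : ℕ) by push_cast; ring, Real.rpow_natCast]
  rw [smul_eq_mul]
  linear_combination (-2 * ∫ x in (0 : ℝ)..c, x ^ (2 * m) * Real.exp (-σ * x ^ 2)) * hσν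

namespace PhiFun

noncomputable def coeff (φ : ℝ) (n : ℕ) : ℂ :=
  Complex.I ^ (n + 1) / (n.factorial : ℂ) *
      ((Real.Gamma (3 * (n + 1) / 2 - 1) / Real.Gamma ((n + 1) / 2) : ℝ) : ℂ) *
      (3 : ℂ) ^ (1 - ((n : ℤ) + 1)) *
      Complex.exp (Complex.I * φ * (1 / 2 - 3 * (n + 1) / 4))

theorem eq_tsum_coeff_mul_pow (φ s : ℝ) : PhiFun φ s = ∑' n : ℕ, coeff φ n * (s : ℂ) ^ n := rfl

theorem Gamma_div_Gamma_pos (n : ℕ) :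
    0 < Real.Gamma (3 * ((n : ℝ) + 1) / 2 - 1) / Real.Gamma (((n : ℝ) + 1) / 2) :=
  div_pos (Real.Gamma_pos_of_pos (by linarith [n.cast_nonneg (α := ℝ)]))
    (Real.Gamma_pos_of_pos (by positivity))

noncomputable def coeffNorm (n : ℕ) : ℝ :=
  Real.Gamma (3 * (n + 1) / 2 - 1) / Real.Gamma ((n + 1) / 2) / 3 ^ n / n.factorial

theorem coeffNorm_pos (n : ℕ) : 0 < coeffNorm n := by
  have := Gamma_div_Gamma_pos n
  unfold coeffNorm
  positivity

theorem norm_coeff (φ : ℝ) (n : ℕ) : ‖coeff φ n‖ = coeffNorm n := by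
  have hexp : ‖Complex.exp (Complex.I * φ * (1 / 2 - 3 * (n + 1) / 4))‖ = 1 := by
    rw [show Complex.I * φ * (1 / 2 - 3 * (n + 1) / 4) =
      ((φ * (1 / 2 - 3 * (n + 1) / 4) : ℝ) : ℂ) * Complex.I by push_cast; ring,
      Complex.norm_exp_ofReal_mul_I]
  have hthree : (3 : ℂ) ^ (1 - ((n : ℤ) + 1)) = ((3 ^ n : ℝ) : ℂ)⁻¹ := by
    rw [show 1 - ((n : ℤ) + 1) = -n by ring, zpow_neg, zpow_natCast]; push_cast; rfl
  rw [coeff, norm_mul, norm_mul, norm_mul, hexp, hthree, norm_div, norm_pow, Complex.norm_I, norm_inv,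
    Complex.norm_real, Complex.norm_real, Complex.norm_natCast,
    Real.norm_of_nonneg (Gamma_div_Gamma_pos n).le, Real.norm_of_nonneg (by positivity), coeffNorm]
  ring

theorem coeffNorm_add_two (n : ℕ) :
    coeffNorm (n + 2) = coeffNorm n *
      ((3 * n + 1) * (3 * n + 3) * (3 * n + 5) / (36 * (n + 1) ^ 2 * (n + 2))) := by
  have hn := n.cast_nonneg (α := ℝ)
  have hΓ₁ : 3 * ((n + 2 : ℕ) + 1 : ℝ) / 2 - 1 = (3 * (n + 1) / 2 - 1) + 1 + 1 + 1 := by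
    push_cast; ring
  have hΓ₂ : ((n + 2 : ℕ) + 1 : ℝ) / 2 = (n + 1) / 2 + 1 := by push_cast; ring
  rw [coeffNorm, coeffNorm, hΓ₁, hΓ₂, Real.Gamma_add_one (by linarith),
    Real.Gamma_add_one (by linarith), Real.Gamma_add_one (by linarith),
    Real.Gamma_add_one (by positivity), Nat.factorial_succ, Nat.factorial_succ]
  push_cast
  field_simp
  ring


theorem sq_coeffNorm_mul_pow_mul_succ_le_of_add_two {c : ℝ} (hc : c ^ 2 ≤ 4 / 3) (n : ℕ) :
    (coeffNorm (n + 2) * c ^ (n + 2)) ^ 2 * ((n + 2 : ℕ) + 1) ≤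
      (coeffNorm n * c ^ n) ^ 2 * (n + 1) := by
  have hratio : ∀ x : ℝ, 0 ≤ x →
      ((3 * x + 1) * (3 * x + 3) * (3 * x + 5) / (36 * (x + 1) ^ 2 * (x + 2)) * c ^ 2) ^ 2 *
        (x + 3) ≤ x + 1 := by
    intro x hx
    calc ((3 * x + 1) * (3 * x + 3) * (3 * x + 5) / (36 * (x + 1) ^ 2 * (x + 2)) * c ^ 2) ^ 2 *
          (x + 3)
        ≤ ((3 * x + 1) * (3 * x + 3) * (3 * x + 5) / (36 * (x + 1) ^ 2 * (x + 2)) * (4 / 3)) ^ 2 *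
          (x + 3) := by gcongr
      _ = ((3 * x + 1) * (3 * x + 3) * (3 * x + 5)) ^ 2 * (x + 3) /
            (27 * (x + 1) ^ 2 * (x + 2)) ^ 2 := by field_simp; ring
      _ ≤ x + 1 := by
        rw [div_le_iff₀ (by positivity)]
        nlinarith [pow_nonneg hx 2, pow_nonneg hx 3, pow_nonneg hx 4, pow_nonneg hx 5,
          pow_nonneg hx 6, pow_nonneg hx 7]
  calc (coeffNorm (n + 2) * c ^ (n + 2)) ^ 2 * ((n + 2 : ℕ) + 1)
      = (coeffNorm n * c ^ n) ^ 2 *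
          (((3 * n + 1) * (3 * n + 3) * (3 * n + 5) / (36 * (n + 1) ^ 2 * (n + 2)) * c ^ 2) ^ 2 *
            (n + 3)) := by
        rw [coeffNorm_add_two]; push_cast; ring
    _ ≤ (coeffNorm n * c ^ n) ^ 2 * (n + 1) := by gcongr; exact hratio n n.cast_nonneg

theorem summable_coeffNorm_mul_pow_div_succ {c : ℝ} (hc : c ^ 2 ≤ 4 / 3) :
    Summable fun n : ℕ => coeffNorm n * c ^ n / (n + 1) :=
  summable_div_succ_of_sq_mul_succ_le
    (le_max_of_le_two_step (b := fun n : ℕ => (coeffNorm n * c ^ n) ^ 2 * (n + 1))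
      (sq_coeffNorm_mul_pow_mul_succ_le_of_add_two hc))


theorem integral_norm_coeff_mul_le {σ c : ℝ} (hσ : 0 ≤ σ) (hc : 0 ≤ c) (φ : ℝ) (n : ℕ) :
    ∫ s in -c..c, ‖coeff φ n * ((s ^ n * Real.exp (-σ * s ^ 2) : ℝ) : ℂ)‖ ≤
      2 * c * (coeffNorm n * c ^ n / (n + 1)) := by
  calc ∫ s in -c..c, ‖coeff φ n * ((s ^ n * Real.exp (-σ * s ^ 2) : ℝ) : ℂ)‖
      ≤ ∫ s in -c..c, coeffNorm n * |s| ^ n := by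
        refine intervalIntegral.integral_mono_on (by linarith)
          (by apply Continuous.intervalIntegrable; fun_prop)
          (by apply Continuous.intervalIntegrable; fun_prop) fun s _ => ?_
        rw [norm_mul, norm_coeff, Complex.norm_real, Real.norm_eq_abs, abs_mul, abs_pow,
          abs_of_pos (Real.exp_pos _)]
        have hexp : Real.exp (-σ * s ^ 2) ≤ 1 := Real.exp_le_one_iff.2 (by nlinarith [sq_nonneg s])
        have := coeffNorm_pos n
        gcongr
        exact mul_le_of_le_one_right (by positivity) hexp
    _ = 2 * c * (coeffNorm n * c ^ n / (n + 1)) := by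
        rw [intervalIntegral.integral_const_mul, integral_abs_pow_neg_symm n hc]; ring

theorem hasSum_coeff_mul_gaussMoment {σ c : ℝ} (hσ : 0 ≤ σ) (hc0 : 0 ≤ c) (hc : c ^ 2 ≤ 4 / 3)
    (φ : ℝ) :
    (Summable fun n => ‖coeff φ n * gaussMoment σ c n‖) ∧
      HasSum (fun n => coeff φ n * gaussMoment σ c n)
        (∫ s in -c..c, PhiFun φ s * ((Real.exp (-σ * s ^ 2) : ℝ) : ℂ)) := by
  set F : ℕ → ℝ → ℂ := fun n s => coeff φ n * ((s ^ n * Real.exp (-σ * s ^ 2) : ℝ) : ℂ)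
  have hF : ∀ n, ∫ s in -c..c, F n s = coeff φ n * gaussMoment σ c n := fun n => by
    rw [intervalIntegral.integral_const_mul, intervalIntegral.integral_ofReal, gaussMoment]
  have hsum : Summable fun n => ∫ s in -c..c, ‖F n s‖ :=
    .of_nonneg_of_le
      (fun n => intervalIntegral.integral_nonneg (by linarith) fun _ _ => norm_nonneg _)
      (integral_norm_coeff_mul_le hσ hc0 φ)
      ((summable_coeffNorm_mul_pow_div_succ hc).mul_left (2 * c))
  refine ⟨.of_nonneg_of_le (fun _ => norm_nonneg _) (fun n => ?_) hsum, ?_⟩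
  · rw [← hF]
    exact intervalIntegral.norm_integral_le_integral_norm (by linarith)
  · have hPhi : ∀ s : ℝ, ∑' n, F n s = PhiFun φ s * ((Real.exp (-σ * s ^ 2) : ℝ) : ℂ) := fun s => by
      rw [eq_tsum_coeff_mul_pow, ← tsum_mul_right]
      push_cast [F]
      simp only [mul_assoc]
    simpa only [hF, hPhi] using intervalIntegral.hasSum_integral_of_summable_integral_norm
      (by linarith) (fun n => by apply Continuous.intervalIntegrable; fun_prop) hsum

theorem coeff_two_mul_mul_gaussMoment {σ : ℝ} (hσ : 0 < σ) (φ : ℝ) (m : ℕ) :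
    coeff φ (2 * m) * gaussMoment σ (2 / √3) (2 * m) = rhsTerm σ φ m := by
  have hc : σ * (2 / √3) ^ 2 = 4 / 3 * σ := by
    rw [div_pow, Real.sq_sqrt (by norm_num)]; ring
  have hI : Complex.I ^ (2 * m + 1) = Complex.I * (-1) ^ m := by
    rw [pow_succ, pow_mul, Complex.I_sq]; ring
  have hthree : (3 : ℂ) ^ (1 - (((2 * m : ℕ) : ℤ) + 1)) = ((3 : ℂ) ^ (2 * m))⁻¹ := by
    rw [show 1 - (((2 * m : ℕ) : ℤ) + 1) = -((2 * m : ℕ) : ℤ) by ring, zpow_neg, zpow_natCast]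
  have hΓ₁ : 3 * (((2 * m : ℕ) : ℝ) + 1) / 2 - 1 = 3 * m + 1 / 2 := by push_cast; ring
  have hΓ₂ : (((2 * m : ℕ) : ℝ) + 1) / 2 = m + 1 / 2 := by push_cast; ring
  have hexp : Complex.I * φ * (1 / 2 - 3 * (((2 * m : ℕ) : ℂ) + 1) / 4) =
      Complex.I * φ * (-(3 * m) / 2 - 1 / 4) := by push_cast; ring
  rw [gaussMoment_even hσ (by positivity), hc, coeff, rhsTerm, hI, hthree, hΓ₁, hΓ₂, hexp]
  push_cast
  ring

end PhiFun

theorem stmt11_general (σ : ℝ) (hσ : 0 < σ) (φ : ℝ) :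
    (Summable fun n : ℕ => ‖rhsTerm σ φ n‖) ∧
    (∫ s in (-(2 / Real.sqrt 3))..(2 / Real.sqrt 3),
        PhiFun φ s * ((Real.exp (-σ * s ^ 2) : ℝ) : ℂ)) = ∑' n : ℕ, rhsTerm σ φ n := by
  obtain ⟨hnorm, hsum⟩ := PhiFun.hasSum_coeff_mul_gaussMoment hσ.le (c := 2 / √3) (by positivity)
    (by rw [div_pow, Real.sq_sqrt (by norm_num)]; norm_num) φ
  have hinj : Function.Injective (2 * · : ℕ → ℕ) := mul_right_injective₀ two_ne_zero
  have hodd : ∀ n ∉ Set.range (2 * · : ℕ → ℕ), PhiFun.coeff φ n * gaussMoment σ (2 / √3) n = 0 := by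
    intro n hn
    obtain ⟨m, rfl⟩ := (Nat.even_or_odd n).resolve_left fun ⟨m, hm⟩ => hn ⟨m, by dsimp only; omega⟩
    rw [gaussMoment_odd, Complex.ofReal_zero, mul_zero]
  constructor
  · simpa only [Function.comp_def, PhiFun.coeff_two_mul_mul_gaussMoment hσ] using
      hnorm.comp_injective hinj
  · have := (hinj.hasSum_iff hodd).2 hsum
    simp only [Function.comp_def, PhiFun.coeff_two_mul_mul_gaussMoment hσ] at this
    exact this.tsum_eq.symm

theorem stmt11 (σ : ℝ) (hσ : 0 < σ) (φ : ℝ) (hφ : φ ∈ Set.Icc (-(2 * Real.pi / 3)) (2 * Real.pi / 3)) :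
    (Summable fun n : ℕ => ‖rhsTerm σ φ n‖) ∧
    (∫ s in (-(2 / Real.sqrt 3))..(2 / Real.sqrt 3),
        PhiFun φ s * ((Real.exp (-σ * s ^ 2) : ℝ) : ℂ)) = ∑' n : ℕ, rhsTerm σ φ n :=
  stmt11_general σ hσ φ
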